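/- arXiv:0905.4356 — 4 statements merged into one kernel-verified Lean document; each statement's English description precedes it below -/
import Mathlib

section
/- Let H > 0 and let θ : ℝ → ℝ be a twice differentiable function satisfying the pendulum equation θ̈(t) + 2H·sin θ(t) = 0 for all t. Then the functions x1(t) = √(2H)·cos(θ(t)/2), x2(t) = √(2H)·sin(θ(t)/2), x3(t) = −θ̇(t)/2 satisfy the Euler top system ẋ1(t) = x2(t)·x3(t), ẋ2(t) = −x1(t)·x3(t), ẋ3(t) = x1(t)·x2(t) for all t, and moreover x1(t)² + x2(t)² = 2H for all t. -/
/-- A solution of the pendulum equation `θ̈ + 2H sin θ = 0` gives a solution of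
the Euler top system on the level surface `x1² + x2² = 2H`. -/
theorem pendulum_to_euler_top_H
    (H : ℝ) (hH : 0 < H) (θ : ℝ → ℝ)
    (hθ : Differentiable ℝ θ) (hθ' : Differentiable ℝ (deriv θ))
    (hpend : ∀ t, deriv (deriv θ) t + 2 * H * Real.sin (θ t) = 0)
    (x1 x2 x3 : ℝ → ℝ)
    (hx1 : ∀ t, x1 t = Real.sqrt (2 * H) * Real.cos (θ t / 2))
    (hx2 : ∀ t, x2 t = Real.sqrt (2 * H) * Real.sin (θ t / 2))
    (hx3 : ∀ t, x3 t = -(deriv θ t) / 2) :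
    (∀ t, deriv x1 t = x2 t * x3 t) ∧
    (∀ t, deriv x2 t = -(x1 t * x3 t)) ∧
    (∀ t, deriv x3 t = x1 t * x2 t) ∧
    (∀ t, (x1 t) ^ 2 + (x2 t) ^ 2 = 2 * H) := by
  set c := Real.sqrt (2 * H) with hc
  have hc2 : c ^ 2 = 2 * H := Real.sq_sqrt (by linarith)
  have hx1f : x1 = fun t => c * Real.cos (θ t / 2) := funext hx1
  have hx2f : x2 = fun t => c * Real.sin (θ t / 2) := funext hx2
  have hx3f : x3 = fun t => -(deriv θ t) / 2 := funext hx3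
  have hhalf : ∀ t, HasDerivAt (fun t => θ t / 2) (deriv θ t / 2) t :=
    fun t => (hθ t).hasDerivAt.div_const 2
  refine ⟨?_, ?_, ?_, ?_⟩
  · intro t
    rw [hx1f, hx2 t, hx3 t]
    have : HasDerivAt (fun t => c * Real.cos (θ t / 2))
        (c * (-Real.sin (θ t / 2) * (deriv θ t / 2))) t :=
      ((hhalf t).cos).const_mul c
    rw [this.deriv]; ring
  · intro t
    rw [hx2f, hx1 t, hx3 t]
    have : HasDerivAt (fun t => c * Real.sin (θ t / 2))
        (c * (Real.cos (θ t / 2) * (deriv θ t / 2))) t :=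
      ((hhalf t).sin).const_mul c
    rw [this.deriv]; ring
  · intro t
    rw [hx3f, hx1 t, hx2 t]
    have : HasDerivAt (fun t => -(deriv θ t) / 2) (-(deriv (deriv θ) t) / 2) t := by
      simpa [neg_div] using ((hθ' t).hasDerivAt.neg).div_const 2
    rw [this.deriv]
    have h2 := hpend t
    have hs : Real.sin (θ t) = 2 * Real.sin (θ t / 2) * Real.cos (θ t / 2) := by
      rw [← Real.sin_two_mul]; ring_nf
    have h3 : deriv (deriv θ) t = -(2 * H * Real.sin (θ t)) := by linarith
    rw [h3, hs]
    linear_combination (-(Real.sin (θ t / 2) * Real.cos (θ t / 2))) * hc2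
  · intro t
    rw [hx1 t, hx2 t]
    have := Real.sin_sq_add_cos_sq (θ t / 2)
    nlinarith [hc2]
end

section
/- Let H > 0 and let x1, x2, x3 : ℝ → ℝ be continuously differentiable functions satisfying the Euler top system ẋ1(t) = x2(t)·x3(t), ẋ2(t) = −x1(t)·x3(t), ẋ3(t) = x1(t)·x2(t) and the constraint x1(t)² + x2(t)² = 2H for all t. Then there exists a twice differentiable function θ : ℝ → ℝ such that x1(t) = √(2H)·cos(θ(t)/2), x2(t) = √(2H)·sin(θ(t)/2), x3(t) = −θ̇(t)/2 for all t, and θ satisfies the pendulum equation θ̈(t) + 2H·sin θ(t) = 0 for all t. -/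
/-!
Integrate `φ' = -x₃` from a polar angle of `(x₁(0), x₂(0))`. By the first two Euler equations
`(x₁, x₂)` rotates with angular velocity `-x₃`, exactly as `(cos φ, sin φ)` does, so
`x₁ cos φ + x₂ sin φ` is constant, equal to the radius `√(2H)` of the circle on which `(x₁, x₂)`
moves; equality in Cauchy–Schwarz then forces `(x₁, x₂) = √(2H) (cos φ, sin φ)`.
The angle `θ = 2φ` has `θ' = -2x₃`, so the third Euler equation gives
`θ'' = -2x₁x₂ = -2H sin θ`.
-/

open Real

lemma exists_eq_mul_cos_and_eq_mul_sin {a b r : ℝ} (hr : 0 ≤ r) (h : a ^ 2 + b ^ 2 = r ^ 2) :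
    ∃ φ, a = r * cos φ ∧ b = r * sin φ := by
  have hnorm : ‖(⟨a, b⟩ : ℂ)‖ = r := by
    rw [Complex.norm_def, Complex.normSq_mk, ← sq, ← sq, h, sqrt_sq hr]
  exact ⟨Complex.arg ⟨a, b⟩, by rw [← hnorm, Complex.norm_mul_cos_arg],
    by rw [← hnorm, Complex.norm_mul_sin_arg]⟩

lemma eq_mul_cos_and_eq_mul_sin_of_mul_cos_add_mul_sin_eq {a b r φ : ℝ}
    (h : a ^ 2 + b ^ 2 = r ^ 2) (hφ : a * cos φ + b * sin φ = r) :
    a = r * cos φ ∧ b = r * sin φ := by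
  have hsum : (a - r * cos φ) ^ 2 + (b - r * sin φ) ^ 2 = 0 := by
    linear_combination h - 2 * r * hφ + r ^ 2 * sin_sq_add_cos_sq φ
  obtain ⟨ha, hb⟩ := (add_eq_zero_iff_of_nonneg (sq_nonneg _) (sq_nonneg _)).mp hsum
  exact ⟨sub_eq_zero.mp (pow_eq_zero_iff two_ne_zero |>.mp ha),
    sub_eq_zero.mp (pow_eq_zero_iff two_ne_zero |>.mp hb)⟩

theorem exists_angle_of_hasDerivAt_rotation {x y w : ℝ → ℝ} {r : ℝ} (hr : 0 ≤ r)
    (hx : ∀ t, HasDerivAt x (y t * w t) t) (hy : ∀ t, HasDerivAt y (-(x t * w t)) t)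
    (hw : Continuous w) (hxy : ∀ t, x t ^ 2 + y t ^ 2 = r ^ 2) :
    ∃ φ : ℝ → ℝ, (∀ t, HasDerivAt φ (-w t) t) ∧
      ∀ t, x t = r * cos (φ t) ∧ y t = r * sin (φ t) := by
  obtain ⟨φ₀, hx₀, hy₀⟩ := exists_eq_mul_cos_and_eq_mul_sin hr (hxy 0)
  set φ : ℝ → ℝ := fun t => φ₀ - ∫ s in (0 : ℝ)..t, w s
  have hφ : ∀ t, HasDerivAt φ (-w t) t := fun t =>
    (hw.integral_hasStrictDerivAt 0 t).hasDerivAt.const_sub φ₀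
  set g : ℝ → ℝ := fun t => x t * cos (φ t) + y t * sin (φ t)
  have hg : ∀ t, HasDerivAt g 0 t := fun t =>
    (((hx t).mul (hφ t).cos).add ((hy t).mul (hφ t).sin)).congr_deriv (by ring)
  have hg₀ : g 0 = r := by
    simp only [g, φ, intervalIntegral.integral_same, sub_zero, hx₀, hy₀]
    linear_combination r * sin_sq_add_cos_sq φ₀
  refine ⟨φ, hφ, fun t => eq_mul_cos_and_eq_mul_sin_of_mul_cos_add_mul_sin_eq (hxy t) ?_⟩
  calc g t = g 0 :=
        is_const_of_deriv_eq_zero (fun s => (hg s).differentiableAt) (fun s => (hg s).deriv) t 0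
    _ = r := hg₀

theorem euler_top_to_pendulum_H_general
    (H : ℝ) (x1 x2 x3 : ℝ → ℝ)
    (hx1 : ContDiff ℝ 1 x1) (hx2 : ContDiff ℝ 1 x2) (hx3 : ContDiff ℝ 1 x3)
    (h1 : ∀ t, deriv x1 t = x2 t * x3 t)
    (h2 : ∀ t, deriv x2 t = -(x1 t * x3 t))
    (h3 : ∀ t, deriv x3 t = x1 t * x2 t)
    (hlevel : ∀ t, (x1 t) ^ 2 + (x2 t) ^ 2 = 2 * H) :
    ∃ θ : ℝ → ℝ,
      Differentiable ℝ θ ∧ Differentiable ℝ (deriv θ) ∧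
      (∀ t, x1 t = Real.sqrt (2 * H) * Real.cos (θ t / 2)) ∧
      (∀ t, x2 t = Real.sqrt (2 * H) * Real.sin (θ t / 2)) ∧
      (∀ t, x3 t = -(deriv θ t) / 2) ∧
      (∀ t, deriv (deriv θ) t + 2 * H * Real.sin (θ t) = 0) := by
  have hd1 : ∀ t, HasDerivAt x1 (x2 t * x3 t) t := fun t =>
    h1 t ▸ (hx1.differentiable one_ne_zero t).hasDerivAt
  have hd2 : ∀ t, HasDerivAt x2 (-(x1 t * x3 t)) t := fun t =>
    h2 t ▸ (hx2.differentiable one_ne_zero t).hasDerivAt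
  have hd3 : ∀ t, HasDerivAt x3 (x1 t * x2 t) t := fun t =>
    h3 t ▸ (hx3.differentiable one_ne_zero t).hasDerivAt
  have hr : √(2 * H) ^ 2 = 2 * H := sq_sqrt (hlevel 0 ▸ by positivity)
  obtain ⟨φ, hφ, hpolar⟩ := exists_angle_of_hasDerivAt_rotation (sqrt_nonneg _) hd1 hd2
    hx3.continuous fun t => hr ▸ hlevel t
  have hθ' : deriv (fun t => 2 * φ t) = fun t => -(2 * x3 t) :=
    funext fun t => ((hφ t).const_mul 2).deriv.trans (by ring)
  refine ⟨fun t => 2 * φ t, fun t => ((hφ t).const_mul 2).differentiableAt,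
    hθ' ▸ ((hx3.differentiable one_ne_zero).const_mul 2).neg, fun t => ?_, fun t => ?_,
    fun t => by rw [hθ']; ring, fun t => ?_⟩
  · simpa using (hpolar t).1
  · simpa using (hpolar t).2
  · rw [hθ', ((hd3 t).const_mul 2).fun_neg.deriv, sin_two_mul, (hpolar t).1, (hpolar t).2]
    linear_combination -2 * sin (φ t) * cos (φ t) * hr

/-- A solution of the Euler top system lying on the level surface
`x1² + x2² = 2H` comes from a solution of the pendulum equation
`θ̈ + 2H sin θ = 0` via an angle lift. -/
theorem euler_top_to_pendulum_H
    (H : ℝ) (hH : 0 < H) (x1 x2 x3 : ℝ → ℝ)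
    (hx1 : ContDiff ℝ 1 x1) (hx2 : ContDiff ℝ 1 x2) (hx3 : ContDiff ℝ 1 x3)
    (h1 : ∀ t, deriv x1 t = x2 t * x3 t)
    (h2 : ∀ t, deriv x2 t = -(x1 t * x3 t))
    (h3 : ∀ t, deriv x3 t = x1 t * x2 t)
    (hlevel : ∀ t, (x1 t) ^ 2 + (x2 t) ^ 2 = 2 * H) :
    ∃ θ : ℝ → ℝ,
      Differentiable ℝ θ ∧ Differentiable ℝ (deriv θ) ∧
      (∀ t, x1 t = Real.sqrt (2 * H) * Real.cos (θ t / 2)) ∧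
      (∀ t, x2 t = Real.sqrt (2 * H) * Real.sin (θ t / 2)) ∧
      (∀ t, x3 t = -(deriv θ t) / 2) ∧
      (∀ t, deriv (deriv θ) t + 2 * H * Real.sin (θ t) = 0) :=
  euler_top_to_pendulum_H_general H x1 x2 x3 hx1 hx2 hx3 h1 h2 h3 hlevel
end

section
/- Let τ > 0 and let x1, x2, x3 : ℝ → ℝ be differentiable functions satisfying the delayed Euler top system ẋ1(t) = x2(t)·x3(t), ẋ2(t) = −x1(t)·x3(t), ẋ3(t) = x1(t−τ)·x2(t−τ) for all t. Then the function H(t) = (1/2)·(x1(t)² + x2(t)²) is constant in t. -/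
/-- Conservation of `H(t) = (1/2)(x1(t)² + x2(t)²)` along solutions of the
Euler top system with delay `τ` in the third equation. -/
theorem delayed_euler_top_H_conserved
    (τ : ℝ) (hτ : 0 < τ) (x1 x2 x3 : ℝ → ℝ)
    (hx1 : Differentiable ℝ x1) (hx2 : Differentiable ℝ x2)
    (hx3 : Differentiable ℝ x3)
    (h1 : ∀ t, deriv x1 t = x2 t * x3 t)
    (h2 : ∀ t, deriv x2 t = -(x1 t * x3 t))
    (h3 : ∀ t, deriv x3 t = x1 (t - τ) * x2 (t - τ)) :
    ∀ s t : ℝ,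
      (1 / 2) * ((x1 s) ^ 2 + (x2 s) ^ 2)
        = (1 / 2) * ((x1 t) ^ 2 + (x2 t) ^ 2) := by
  intro s t
  set f : ℝ → ℝ := fun r => (1 / 2) * ((x1 r) ^ 2 + (x2 r) ^ 2) with hf
  have hdiff : Differentiable ℝ f := ((hx1.pow 2).add (hx2.pow 2)).const_mul _
  have hzero : ∀ r, deriv f r = 0 := by
    intro r
    have d1 := (hx1 r).hasDerivAt
    have d2 := (hx2 r).hasDerivAt
    have : HasDerivAt f
        ((1 / 2) * ((2 * x1 r ^ 1 * deriv x1 r) + (2 * x2 r ^ 1 * deriv x2 r))) r :=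
      (((d1.pow 2).add (d2.pow 2)).const_mul _)
    rw [this.deriv, h1, h2]
    ring
  exact _root_.is_const_of_deriv_eq_zero hdiff hzero s t
end

section
/- Let H > 0, τ > 0, and let θ : ℝ → ℝ be a twice differentiable function satisfying the delayed pendulum equation θ̈(t) + 2H·sin θ(t−τ) = 0 for all t. Then the functions x1(t) = √(2H)·cos(θ(t)/2), x2(t) = √(2H)·sin(θ(t)/2), x3(t) = −θ̇(t)/2 satisfy the delayed Euler top system ẋ1(t) = x2(t)·x3(t), ẋ2(t) = −x1(t)·x3(t), ẋ3(t) = x1(t−τ)·x2(t−τ) for all t, and x1(t)² + x2(t)² = 2H for all t. -/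
/-- A solution of the delayed pendulum equation `θ̈(t) + 2H sin θ(t−τ) = 0`
gives a solution of the delayed Euler top system on the level surface
`x1² + x2² = 2H`. -/
theorem delayed_pendulum_to_euler_top_H
    (H τ : ℝ) (hH : 0 < H) (hτ : 0 < τ) (θ : ℝ → ℝ)
    (hθ : Differentiable ℝ θ) (hθ' : Differentiable ℝ (deriv θ))
    (hpend : ∀ t, deriv (deriv θ) t + 2 * H * Real.sin (θ (t - τ)) = 0)
    (x1 x2 x3 : ℝ → ℝ)
    (hx1 : ∀ t, x1 t = Real.sqrt (2 * H) * Real.cos (θ t / 2))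
    (hx2 : ∀ t, x2 t = Real.sqrt (2 * H) * Real.sin (θ t / 2))
    (hx3 : ∀ t, x3 t = -(deriv θ t) / 2) :
    (∀ t, deriv x1 t = x2 t * x3 t) ∧
    (∀ t, deriv x2 t = -(x1 t * x3 t)) ∧
    (∀ t, deriv x3 t = x1 (t - τ) * x2 (t - τ)) ∧
    (∀ t, (x1 t) ^ 2 + (x2 t) ^ 2 = 2 * H) := by
  have hx1f : x1 = fun t => Real.sqrt (2 * H) * Real.cos (θ t / 2) := funext hx1
  have hx2f : x2 = fun t => Real.sqrt (2 * H) * Real.sin (θ t / 2) := funext hx2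
  have hx3f : x3 = fun t => -(deriv θ t) / 2 := funext hx3
  have hsq : Real.sqrt (2 * H) * Real.sqrt (2 * H) = 2 * H := by
    exact Real.mul_self_sqrt (by linarith)
  have hhalf : ∀ t, HasDerivAt (fun t => θ t / 2) (deriv θ t / 2) t := fun t =>
    ((hθ t).hasDerivAt).div_const 2
  refine ⟨?_, ?_, ?_, ?_⟩
  · intro t
    have h : HasDerivAt x1
        (Real.sqrt (2 * H) * (-Real.sin (θ t / 2) * (deriv θ t / 2))) t := by
      rw [hx1f]
      exact ((hhalf t).cos).const_mul _
    rw [h.deriv, hx2 t, hx3 t]; ring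
  · intro t
    have h : HasDerivAt x2
        (Real.sqrt (2 * H) * (Real.cos (θ t / 2) * (deriv θ t / 2))) t := by
      rw [hx2f]
      exact ((hhalf t).sin).const_mul _
    rw [h.deriv, hx1 t, hx3 t]; ring
  · intro t
    have h : HasDerivAt x3 (-(deriv (deriv θ) t) / 2) t := by
      rw [hx3f]
      exact ((hθ' t).hasDerivAt).neg.div_const 2
    rw [h.deriv, hx1, hx2]
    have hp := hpend t
    have : deriv (deriv θ) t = -(2 * H * Real.sin (θ (t - τ))) := by linarith
    have hs : Real.sin (θ (t - τ)) =
        2 * Real.sin (θ (t - τ) / 2) * Real.cos (θ (t - τ) / 2) := by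
      rw [← Real.sin_two_mul]; ring_nf
    rw [this, hs]
    linear_combination (- Real.sin (θ (t - τ) / 2) * Real.cos (θ (t - τ) / 2)) * hsq
  · intro t
    rw [hx1 t, hx2 t]
    have := Real.sin_sq_add_cos_sq (θ t / 2)
    nlinarith [hsq]
end
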